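/- arXiv:1805.05550 — 8 statements merged into one kernel-verified Lean document; each statement's English description precedes it below -/
import Mathlib

section
/- Let λ > 0 and let u : ℝ → ℝ be a twice differentiable bounded function satisfying u'' = λ(e^u - 1) on ℝ with u(x) → 0 as x → ±∞ and u'(x) → 0 as x → ±∞. Then u ≡ 0. -/
/-!
A continuous function vanishing at `±∞` that is somewhere positive attains a positive global
maximum, and one that is somewhere negative attains a negative global minimum. At a maximum
`u'' ≤ 0`, whereas the equation gives `u'' = λ (e^u - 1) > 0` wherever `u > 0`; symmetrically at a
minimum. Hence `u` vanishes identically.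
-/

open Real Filter Topology

/-- If `f'' x > 0`, the second-derivative test makes `x` also a local minimum, so `f` is locally
constant near `x` and `f'' x = 0`. -/
theorem IsLocalMax.deriv_deriv_nonpos {f : ℝ → ℝ} {x : ℝ} (h : IsLocalMax f x)
    (hc : ContinuousAt f x) : deriv (deriv f) x ≤ 0 := by
  by_contra! hpos
  have hmin : IsLocalMin f x := isLocalMin_of_deriv_deriv_pos hpos h.deriv_eq_zero hc
  have hconst : f =ᶠ[𝓝 x] fun _ => f x := (hmin.and h).mono fun y hy => le_antisymm hy.2 hy.1
  have hzero : deriv (deriv f) x = 0 := by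
    rw [hconst.deriv.deriv_eq]
    simp
  linarith

theorem IsLocalMin.deriv_deriv_nonneg {f : ℝ → ℝ} {x : ℝ} (h : IsLocalMin f x)
    (hc : ContinuousAt f x) : 0 ≤ deriv (deriv f) x := by
  simpa [deriv.neg'] using h.neg.deriv_deriv_nonpos hc.neg

theorem Continuous.exists_pos_forall_le_of_tendsto_zero {f : ℝ → ℝ} (hf : Continuous f)
    (hbot : Tendsto f atBot (𝓝 0)) (htop : Tendsto f atTop (𝓝 0)) {x₀ : ℝ} (hx₀ : 0 < f x₀) :
    ∃ m, 0 < f m ∧ ∀ y, f y ≤ f m := by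
  have hcocompact : Tendsto f (cocompact ℝ) (𝓝 0) := by
    rw [cocompact_eq_atBot_atTop]
    exact hbot.sup htop
  obtain ⟨m, hm⟩ := hf.exists_forall_ge' x₀ ((hcocompact.eventually (gt_mem_nhds hx₀)).mono
    fun _ hy => hy.le)
  exact ⟨m, hx₀.trans_le (hm x₀), hm⟩

theorem Continuous.exists_neg_forall_ge_of_tendsto_zero {f : ℝ → ℝ} (hf : Continuous f)
    (hbot : Tendsto f atBot (𝓝 0)) (htop : Tendsto f atTop (𝓝 0)) {x₀ : ℝ} (hx₀ : f x₀ < 0) :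
    ∃ m, f m < 0 ∧ ∀ y, f m ≤ f y := by
  obtain ⟨m, hm, hmax⟩ := hf.neg.exists_pos_forall_le_of_tendsto_zero
    (show Tendsto (fun y => -f y) _ _ by simpa using hbot.neg)
    (show Tendsto (fun y => -f y) _ _ by simpa using htop.neg) (neg_pos.mpr hx₀)
  exact ⟨m, neg_pos.mp hm, fun y => neg_le_neg_iff.mp (hmax y)⟩

theorem stmt0_general (lam : ℝ) (hlam : 0 < lam) (u : ℝ → ℝ)
    (hu : ContDiff ℝ 2 u)
    (heq : ∀ x, deriv (deriv u) x = lam * (Real.exp (u x) - 1))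
    (h1 : Tendsto u atTop (nhds 0)) (h2 : Tendsto u atBot (nhds 0)) :
    ∀ x, u x = 0 := by
  have hc : Continuous u := hu.continuous
  intro x
  by_contra hx
  rcases lt_or_gt_of_ne hx with hneg | hpos
  · obtain ⟨m, hm, hmin⟩ := hc.exists_neg_forall_ge_of_tendsto_zero h2 h1 hneg
    have hlocal : IsLocalMin u m := Eventually.of_forall hmin
    have hconvex := hlocal.deriv_deriv_nonneg hc.continuousAt
    rw [heq] at hconvex
    nlinarith [Real.exp_lt_one_iff.mpr hm]
  · obtain ⟨m, hm, hmax⟩ := hc.exists_pos_forall_le_of_tendsto_zero h2 h1 hpos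
    have hlocal : IsLocalMax u m := Eventually.of_forall hmax
    have hconcave := hlocal.deriv_deriv_nonpos hc.continuousAt
    rw [heq] at hconcave
    nlinarith [Real.one_lt_exp_iff.mpr hm]

theorem stmt0 (lam : ℝ) (hlam : 0 < lam) (u : ℝ → ℝ)
    (hu : ContDiff ℝ 2 u)
    (hbd : ∃ M : ℝ, ∀ x, |u x| ≤ M)
    (heq : ∀ x, deriv (deriv u) x = lam * (Real.exp (u x) - 1))
    (h1 : Tendsto u atTop (nhds 0)) (h2 : Tendsto u atBot (nhds 0))
    (h3 : Tendsto (deriv u) atTop (nhds 0)) (h4 : Tendsto (deriv u) atBot (nhds 0)) :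
    ∀ x, u x = 0 :=
  stmt0_general lam hlam u hu heq h1 h2
end

section
/- Let λ > 0, x₀ ∈ ℝ, and u₀ < 0, and define u(x) = log( e^{u₀ - √λ(x - x₀)} / (1 - e^{u₀} + e^{u₀ - √λ(x - x₀)}) ). Then u is a C² solution of u'' = λ·e^u·(e^u - 1) on ℝ satisfying u(x) → 0 as x → -∞ and u(x) → -∞ as x → +∞. -/
/-!
With `a = 1 - e^{u₀} > 0`, the function is `u(x) = φ(u₀ - √λ (x - x₀))` for the profile
`φ(t) = t - log (a + e^t)`, whose exponential `e^t / (a + e^t)` is a shifted logistic function.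
The profile solves the first-order equation `φ' = 1 - e^φ`; differentiating once more gives
`φ'' = e^φ (e^φ - 1)`, and the affine change of variables contributes the factor `(√λ)² = λ`.
As `t → +∞`, `φ(t) = -log (1 + a e^{-t}) → 0`, and as `t → -∞`, `φ(t) = t - log a + o(1) → -∞`.
-/

open Real Filter Topology

noncomputable def wallProfile (a t : ℝ) : ℝ := t - log (a + exp t)

section

variable {a : ℝ}

theorem wallProfile_eq_log (ha : 0 < a) (t : ℝ) :
    wallProfile a t = log (exp t / (a + exp t)) := by
  rw [log_div (exp_ne_zero t) (add_pos ha (exp_pos t)).ne', log_exp, wallProfile]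

theorem exp_wallProfile (ha : 0 < a) (t : ℝ) : exp (wallProfile a t) = exp t / (a + exp t) := by
  rw [wallProfile_eq_log ha, exp_log (div_pos (exp_pos t) (add_pos ha (exp_pos t)))]

theorem contDiff_wallProfile (ha : 0 < a) {n : WithTop ℕ∞} : ContDiff ℝ n (wallProfile a) :=
  contDiff_id.sub ((contDiff_const.add contDiff_exp).log fun t => (add_pos ha (exp_pos t)).ne')

theorem hasDerivAt_wallProfile (ha : 0 < a) (t : ℝ) :
    HasDerivAt (wallProfile a) (1 - exp (wallProfile a t)) t := by
  have h : HasDerivAt (fun t => t - log (a + exp t)) (1 - exp t / (a + exp t)) t :=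
    (hasDerivAt_id' t).sub (((hasDerivAt_exp t).const_add a).log (add_pos ha (exp_pos t)).ne')
  rwa [exp_wallProfile ha]

theorem deriv_wallProfile (ha : 0 < a) :
    deriv (wallProfile a) = fun t => 1 - exp (wallProfile a t) :=
  funext fun t => (hasDerivAt_wallProfile ha t).deriv

theorem hasDerivAt_deriv_wallProfile (ha : 0 < a) (t : ℝ) :
    HasDerivAt (deriv (wallProfile a))
      (exp (wallProfile a t) * (exp (wallProfile a t) - 1)) t := by
  rw [deriv_wallProfile ha]
  exact ((hasDerivAt_wallProfile ha t).exp.const_sub 1).congr_deriv (by ring)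

theorem tendsto_wallProfile_atTop (ha : 0 < a) : Tendsto (wallProfile a) atTop (𝓝 0) := by
  have h : ∀ t, wallProfile a t = -log (a * exp (-t) + 1) := fun t => by
    rw [show a * exp (-t) + 1 = (a + exp t) * exp (-t) by rw [add_mul, ← exp_add]; simp,
      log_mul (add_pos ha (exp_pos t)).ne' (exp_ne_zero _), log_exp, wallProfile]
    ring
  have hlim : Tendsto (fun t => a * exp (-t) + 1) atTop (𝓝 (a * 0 + 1)) :=
    ((tendsto_exp_atBot.comp tendsto_neg_atTop_atBot).const_mul a).add_const 1
  simpa [funext h] using (hlim.log (by simp)).neg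

theorem tendsto_wallProfile_atBot (ha : 0 < a) : Tendsto (wallProfile a) atBot atBot := by
  have h : Tendsto (fun t => log (a + exp t)) atBot (𝓝 (log (a + 0))) :=
    (tendsto_exp_atBot.const_add a).log (by simpa using ha.ne')
  show Tendsto (fun t => t - log (a + exp t)) atBot atBot
  simpa [sub_eq_add_neg] using tendsto_id.atBot_add h.neg

end

theorem deriv_comp_const_sub_mul_sub (f : ℝ → ℝ) (c m x₀ : ℝ) :
    deriv (fun x => f (c - m * (x - x₀))) = fun x => -m * deriv f (c - m * (x - x₀)) := by
  funext x
  rw [deriv_comp_sub_const (f := fun y => f (c - m * y)),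
    deriv_comp_mul_left (f := fun z => f (c - z)), deriv_comp_const_sub, smul_eq_mul]
  ring

theorem tendsto_const_sub_mul_sub_atBot {m : ℝ} (hm : 0 < m) (c x₀ : ℝ) :
    Tendsto (fun x => c - m * (x - x₀)) atBot atTop :=
  tendsto_atTop_add_const_left _ c <| tendsto_neg_atBot_atTop.comp <|
    (tendsto_atBot_add_const_right _ (-x₀) tendsto_id).const_mul_atBot hm

theorem tendsto_const_sub_mul_sub_atTop {m : ℝ} (hm : 0 < m) (c x₀ : ℝ) :
    Tendsto (fun x => c - m * (x - x₀)) atTop atBot :=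
  tendsto_atBot_add_const_left _ c <| tendsto_neg_atTop_atBot.comp <|
    (tendsto_atTop_add_const_right _ (-x₀) tendsto_id).const_mul_atTop hm

theorem stmt7 (lam x₀ u₀ : ℝ) (hlam : 0 < lam) (hu₀ : u₀ < 0) (u : ℝ → ℝ)
    (hu : u = fun x => Real.log (Real.exp (u₀ - Real.sqrt lam * (x - x₀)) /
      (1 - Real.exp u₀ + Real.exp (u₀ - Real.sqrt lam * (x - x₀))))) :
    ContDiff ℝ 2 u ∧
    (∀ x, deriv (deriv u) x = lam * Real.exp (u x) * (Real.exp (u x) - 1)) ∧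
    Tendsto u atBot (nhds 0) ∧ Tendsto u atTop atBot := by
  set a := 1 - exp u₀
  have ha : 0 < a := sub_pos.2 (exp_lt_one_iff.2 hu₀)
  have hs : 0 < √lam := sqrt_pos.2 hlam
  obtain rfl : u = fun x => wallProfile a (u₀ - √lam * (x - x₀)) :=
    hu.trans (funext fun x => (wallProfile_eq_log ha _).symm)
  refine ⟨(contDiff_wallProfile ha).comp (by fun_prop), fun x => ?_,
    (tendsto_wallProfile_atTop ha).comp (tendsto_const_sub_mul_sub_atBot hs u₀ x₀),
    (tendsto_wallProfile_atBot ha).comp (tendsto_const_sub_mul_sub_atTop hs u₀ x₀)⟩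
  rw [deriv_comp_const_sub_mul_sub (wallProfile a), deriv_const_mul_field',
    deriv_comp_const_sub_mul_sub (deriv (wallProfile a))]
  beta_reduce
  rw [(hasDerivAt_deriv_wallProfile ha _).deriv, ← mul_assoc, neg_mul_neg,
    mul_self_sqrt hlam.le]
  ring
end

section
/- Let κ > 0 and φ : ℝ → ℝ satisfy φ' = -(1/κ)φ(1-φ²) with φ(-∞) = 1, φ(+∞) = 0 and φ integrable appropriately. Then the total magnetic charge ∫_ℝ (2/κ²)·φ²(1 - φ²) dx = 1/κ. -/
/-!
Along a solution of `φ' = -(1/κ) φ (1 - φ²)` the magnetic field `(2/κ²) φ² (1 - φ²)` is the derivative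
of the gauge potential `A = -(1/κ) φ²`, so the total charge is `A(+∞) - A(-∞) = 0 - (-1/κ)`.
-/

open Real Filter MeasureTheory

theorem hasDerivAt_neg_div_mul_sq_of_bogomolny {κ x : ℝ} {φ : ℝ → ℝ}
    (hφ : HasDerivAt φ (-(1 / κ) * φ x * (1 - φ x ^ 2)) x) :
    HasDerivAt (fun y => -(1 / κ) * φ y ^ 2) ((2 / κ ^ 2) * φ x ^ 2 * (1 - φ x ^ 2)) x :=
  ((hφ.fun_pow 2).const_mul (-(1 / κ))).congr_deriv (by ring)

theorem stmt10_general (κ : ℝ) (φ : ℝ → ℝ)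
    (hφ : Differentiable ℝ φ)
    (heq : ∀ x, deriv φ x = -(1 / κ) * φ x * (1 - (φ x) ^ 2))
    (h1 : Tendsto φ atBot (nhds 1)) (h2 : Tendsto φ atTop (nhds 0))
    (hint : Integrable (fun x => (2 / κ ^ 2) * (φ x) ^ 2 * (1 - (φ x) ^ 2))) :
    ∫ x : ℝ, (2 / κ ^ 2) * (φ x) ^ 2 * (1 - (φ x) ^ 2) = 1 / κ := by
  have hA : ∀ x, HasDerivAt (fun y => -(1 / κ) * φ y ^ 2)
      ((2 / κ ^ 2) * φ x ^ 2 * (1 - φ x ^ 2)) x := fun x =>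
    hasDerivAt_neg_div_mul_sq_of_bogomolny (heq x ▸ (hφ x).hasDerivAt)
  rw [integral_of_hasDerivAt_of_tendsto hA hint ((h1.pow 2).const_mul _) ((h2.pow 2).const_mul _)]
  ring

theorem stmt10 (κ : ℝ) (hκ : 0 < κ) (φ : ℝ → ℝ)
    (hφ : Differentiable ℝ φ)
    (heq : ∀ x, deriv φ x = -(1 / κ) * φ x * (1 - (φ x) ^ 2))
    (h1 : Tendsto φ atBot (nhds 1)) (h2 : Tendsto φ atTop (nhds 0))
    (hint : Integrable (fun x => (2 / κ ^ 2) * (φ x) ^ 2 * (1 - (φ x) ^ 2))) :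
    ∫ x : ℝ, (2 / κ ^ 2) * (φ x) ^ 2 * (1 - (φ x) ^ 2) = 1 / κ :=
  stmt10_general κ φ hφ heq h1 h2 hint
end

section
/- Let λ > 0, b = e^{u₀}(2 - e^{u₀}) for some u₀ < 0, x₀ ∈ ℝ, and define u(x) = u₀ + log(2 - e^{u₀}) - log( 1 + (1 - e^{u₀})·cosh(√(λb)·(x - x₀)) ). Then u is an even function about x₀, a C² solution of u'' = λ·e^u·(e^u - 1) on ℝ, attains its global maximum u₀ at x₀, and u(x) → -∞ as x → ±∞. -/
/-!
With `c = 1 - e^{u₀} ∈ (0, 1)` the solution reads `u = log (1 - c²) - log D`, where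
`D = 1 + c cosh (k (x - x₀))` and `k² = λ (1 - c²)`. Since `D' = c k sinh` and
`D'' = c k² cosh`, the identity `cosh² - sinh² = 1` gives `(log D)'' = k² (D - (1 - c²)) / D²`,
while `e^u (e^u - 1) = -(1 - c²) (D - (1 - c²)) / D²`; this is the equation. Evenness, the
maximum and the limits at `±∞` all come from the corresponding properties of `cosh`.
-/

open Real Filter

namespace Real

theorem tendsto_cosh_atTop : Tendsto cosh atTop atTop := by
  refine tendsto_atTop_mono (fun y => ?_) (tendsto_exp_atTop.atTop_div_const two_pos)
  rw [cosh_eq]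
  linarith [exp_pos (-y)]

theorem tendsto_cosh_atBot : Tendsto cosh atBot atTop := by
  simpa [Function.comp_def] using tendsto_cosh_atTop.comp tendsto_neg_atBot_atTop

end Real

noncomputable section

def coshDenom (c k x₀ x : ℝ) : ℝ := 1 + c * cosh (k * (x - x₀))

def coshProfile (c k x₀ x : ℝ) : ℝ := log (1 - c ^ 2) - log (coshDenom c k x₀ x)

variable {c : ℝ} (k x₀ : ℝ)

theorem coshDenom_symm (x : ℝ) : coshDenom c k x₀ (x₀ + x) = coshDenom c k x₀ (x₀ - x) := by
  simp only [coshDenom, add_sub_cancel_left, sub_sub_cancel_left, mul_neg, cosh_neg]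

theorem coshDenom_center : coshDenom c k x₀ x₀ = 1 + c := by
  simp [coshDenom]

theorem one_add_le_coshDenom (hc : 0 ≤ c) (x : ℝ) : 1 + c ≤ coshDenom c k x₀ x := by
  have := one_le_cosh (k * (x - x₀))
  unfold coshDenom
  nlinarith

theorem coshDenom_pos (hc : 0 ≤ c) (x : ℝ) : 0 < coshDenom c k x₀ x := by
  linarith [one_add_le_coshDenom k x₀ hc x]

theorem hasDerivAt_mul_sub (x : ℝ) : HasDerivAt (fun y => k * (y - x₀)) k x := by
  simpa using ((hasDerivAt_id x).sub_const x₀).const_mul k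

theorem hasDerivAt_coshDenom (x : ℝ) :
    HasDerivAt (coshDenom c k x₀) (c * k * sinh (k * (x - x₀))) x :=
  (((hasDerivAt_mul_sub k x₀ x).cosh.const_mul c).const_add 1).congr_deriv (by ring)

theorem hasDerivAt_sinh_mul_sub (x : ℝ) :
    HasDerivAt (fun y => sinh (k * (y - x₀))) (k * cosh (k * (x - x₀))) x :=
  (hasDerivAt_mul_sub k x₀ x).sinh.congr_deriv (by ring)

theorem contDiff_coshProfile (hc : 0 ≤ c) {n : WithTop ℕ∞} :
    ContDiff ℝ n (coshProfile c k x₀) := by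
  have hD : ContDiff ℝ n (coshDenom c k x₀) := by unfold coshDenom; fun_prop
  exact contDiff_const.sub (hD.log fun x => (coshDenom_pos k x₀ hc x).ne')

theorem hasDerivAt_coshProfile (hc : 0 ≤ c) (x : ℝ) :
    HasDerivAt (coshProfile c k x₀) (-(c * k * sinh (k * (x - x₀)) / coshDenom c k x₀ x)) x :=
  ((hasDerivAt_coshDenom k x₀ x).log (coshDenom_pos k x₀ hc x).ne').const_sub _

theorem deriv_deriv_coshProfile (hc : 0 ≤ c) (x : ℝ) :
    deriv (deriv (coshProfile c k x₀)) x =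
      -k ^ 2 * (coshDenom c k x₀ x - (1 - c ^ 2)) / coshDenom c k x₀ x ^ 2 := by
  have hderiv : deriv (coshProfile c k x₀) =
      fun x => -(c * k * sinh (k * (x - x₀)) / coshDenom c k x₀ x) :=
    funext fun x => (hasDerivAt_coshProfile k x₀ hc x).deriv
  have hD := (coshDenom_pos k x₀ hc x).ne'
  have h2 : HasDerivAt (fun x => -(c * k * sinh (k * (x - x₀)) / coshDenom c k x₀ x))
      (-((c * k * (k * cosh (k * (x - x₀))) * coshDenom c k x₀ x -
        c * k * sinh (k * (x - x₀)) * (c * k * sinh (k * (x - x₀)))) /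
          coshDenom c k x₀ x ^ 2)) x :=
    (((hasDerivAt_sinh_mul_sub k x₀ x).const_mul (c * k)).div (hasDerivAt_coshDenom k x₀ x) hD).neg
  rw [hderiv, h2.deriv]
  field_simp
  unfold coshDenom
  linear_combination (-c ^ 2 * k ^ 2) * cosh_sq_sub_sinh_sq (k * (x - x₀))

theorem exp_coshProfile (hc₀ : 0 ≤ c) (hc₁ : c < 1) (x : ℝ) :
    exp (coshProfile c k x₀ x) = (1 - c ^ 2) / coshDenom c k x₀ x := by
  rw [coshProfile, exp_sub, exp_log (by nlinarith), exp_log (coshDenom_pos k x₀ hc₀ x)]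

theorem deriv_deriv_coshProfile_eq_mul_exp {lam : ℝ} (hc₀ : 0 ≤ c) (hc₁ : c < 1)
    (hk : k ^ 2 = lam * (1 - c ^ 2)) (x : ℝ) :
    deriv (deriv (coshProfile c k x₀)) x =
      lam * exp (coshProfile c k x₀ x) * (exp (coshProfile c k x₀ x) - 1) := by
  have hD := (coshDenom_pos k x₀ hc₀ x).ne'
  rw [deriv_deriv_coshProfile k x₀ hc₀, exp_coshProfile k x₀ hc₀ hc₁, hk]
  field_simp
  ring

theorem coshProfile_symm (x : ℝ) :
    coshProfile c k x₀ (x₀ + x) = coshProfile c k x₀ (x₀ - x) := by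
  rw [coshProfile, coshProfile, coshDenom_symm]

theorem coshProfile_le_center (hc : 0 ≤ c) (x : ℝ) :
    coshProfile c k x₀ x ≤ coshProfile c k x₀ x₀ := by
  rw [coshProfile, coshProfile, coshDenom_center]
  exact sub_le_sub_left (log_le_log (by linarith) (one_add_le_coshDenom k x₀ hc x)) _

theorem coshProfile_center (hc₀ : 0 ≤ c) (hc₁ : c < 1) :
    coshProfile c k x₀ x₀ = log (1 - c) := by
  rw [coshProfile, coshDenom_center, show 1 - c ^ 2 = (1 - c) * (1 + c) by ring,
    log_mul (by linarith) (by linarith), add_sub_cancel_right]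

theorem tendsto_coshProfile_of_tendsto_cosh (hc : 0 < c) {l : Filter ℝ}
    (h : Tendsto (fun x => cosh (k * (x - x₀))) l atTop) : Tendsto (coshProfile c k x₀) l atBot :=
  tendsto_atBot_add_const_left _ _ <| tendsto_neg_atTop_atBot.comp <|
    tendsto_log_atTop.comp <| tendsto_atTop_add_const_left _ 1 (h.const_mul_atTop hc)

theorem tendsto_coshProfile_atTop (hc : 0 < c) (hk : 0 < k) :
    Tendsto (coshProfile c k x₀) atTop atBot :=
  tendsto_coshProfile_of_tendsto_cosh k x₀ hc <| tendsto_cosh_atTop.comp <|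
    (tendsto_atTop_add_const_right _ (-x₀) tendsto_id).const_mul_atTop hk

theorem tendsto_coshProfile_atBot (hc : 0 < c) (hk : 0 < k) :
    Tendsto (coshProfile c k x₀) atBot atBot :=
  tendsto_coshProfile_of_tendsto_cosh k x₀ hc <| tendsto_cosh_atBot.comp <|
    (tendsto_atBot_add_const_right _ (-x₀) tendsto_id).const_mul_atBot hk

end

theorem stmt11 (lam x₀ u₀ : ℝ) (hlam : 0 < lam) (hu₀ : u₀ < 0)
    (b : ℝ) (hb : b = Real.exp u₀ * (2 - Real.exp u₀)) (u : ℝ → ℝ)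
    (hu : u = fun x => u₀ + Real.log (2 - Real.exp u₀) -
      Real.log (1 + (1 - Real.exp u₀) * Real.cosh (Real.sqrt (lam * b) * (x - x₀)))) :
    (∀ x, u (x₀ + x) = u (x₀ - x)) ∧
    ContDiff ℝ 2 u ∧
    (∀ x, deriv (deriv u) x = lam * Real.exp (u x) * (Real.exp (u x) - 1)) ∧
    (∀ x, u x ≤ u₀) ∧ u x₀ = u₀ ∧
    Tendsto u atTop atBot ∧ Tendsto u atBot atBot := by
  set c := 1 - exp u₀
  set k := √(lam * b)
  have hc₀ : 0 < c := sub_pos.mpr (exp_lt_one_iff.mpr hu₀)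
  have hc₁ : c < 1 := sub_lt_self 1 (exp_pos u₀)
  have hb' : b = 1 - c ^ 2 := by rw [hb]; ring
  have hlamb : 0 < lam * b := mul_pos hlam (by rw [hb']; nlinarith)
  have hk : 0 < k := sqrt_pos.mpr hlamb
  have hk₂ : k ^ 2 = lam * (1 - c ^ 2) := by rw [sq_sqrt hlamb.le, hb']
  have hu' : u = coshProfile c k x₀ := by
    rw [hu]
    funext x
    rw [coshProfile, coshDenom, ← hb', hb, log_mul (exp_pos u₀).ne' (by linarith), log_exp]
  have hcenter : coshProfile c k x₀ x₀ = u₀ := by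
    rw [coshProfile_center k x₀ hc₀.le hc₁, sub_sub_cancel, log_exp]
  subst hu'
  exact ⟨coshProfile_symm k x₀, contDiff_coshProfile k x₀ hc₀.le,
    deriv_deriv_coshProfile_eq_mul_exp k x₀ hc₀.le hc₁ hk₂,
    fun x => (coshProfile_le_center k x₀ hc₀.le x).trans_eq hcenter, hcenter,
    tendsto_coshProfile_atTop k x₀ hc₀ hk, tendsto_coshProfile_atBot k x₀ hc₀ hk⟩
end

section
/- Let λ > 0, γ > 0, and let U₁, U₂ : ℝ → ℝ be bounded C² functions satisfying U₁'' = λ(e^{U₁+U₂} + e^{U₁-U₂} - 2) and U₂'' = λγ·e^{U₁}(e^{U₂} - e^{-U₂}) on ℝ with U₁(±∞) = U₂(±∞) = 0 and U₁'(±∞) = U₂'(±∞) = 0. Then U₁ ≡ 0 and U₂ ≡ 0. -/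
/-!
Both equations have the form `f'' = g` where `g` has the sign of `f`: for `U₂` directly, and
for `U₁` once `U₂ = 0` is known. Such an `f` vanishing at `±∞` cannot have a positive value:
it would attain a positive maximum, near which `f` is convex; a convex function with an interior
maximum is constant near it, so the maximal level set is clopen, i.e. `f` is a positive
constant. Applied to `f` and `-f` this gives `f = 0`.
-/

open Real Filter Metric Set

lemma ConvexOn.eqOn_closedBall_of_isMaxOn {E : Type*} [NormedAddCommGroup E] [NormedSpace ℝ E]
    {f : E → ℝ} {z : E} {δ : ℝ} (hconv : ConvexOn ℝ (closedBall z δ) f)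
    (hmax : IsMaxOn f (closedBall z δ) z) : EqOn f (fun _ ↦ f z) (closedBall z δ) := by
  intro y hy
  have hy' : (2 : ℝ) • z - y ∈ closedBall z δ := by
    rw [mem_closedBall, dist_eq_norm] at hy ⊢
    rwa [two_smul, add_sub_assoc, add_sub_cancel_left, ← norm_neg, neg_sub]
  -- `z` is the midpoint of `y` and its reflection `2 • z - y`
  have hmid := hconv.2 hy hy' (by norm_num : (0 : ℝ) ≤ 1 / 2)
    (by norm_num : (0 : ℝ) ≤ 1 / 2) (by norm_num)
  have hz : (1 / 2 : ℝ) • y + (1 / 2 : ℝ) • ((2 : ℝ) • z - y) = z := by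
    rw [smul_sub, smul_smul]; norm_num
  rw [hz, smul_eq_mul, smul_eq_mul] at hmid
  have : f ((2 : ℝ) • z - y) ≤ f z := hmax hy'
  have : f y ≤ f z := hmax hy
  linarith

variable {f : ℝ → ℝ}

lemma exists_convexOn_closedBall_of_deriv2_nonneg (hf : ContDiff ℝ 2 f)
    (hpos : ∀ x, 0 < f x → 0 ≤ deriv (deriv f) x) {z : ℝ} (hz : 0 < f z) :
    ∃ δ > 0, ConvexOn ℝ (closedBall z δ) f := by
  obtain ⟨δ, hδ, hball⟩ :=
    Metric.eventually_nhds_iff.1 ((hf.continuous.tendsto z).eventually_const_lt hz)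
  refine ⟨δ / 2, half_pos hδ, convexOn_of_deriv2_nonneg' (convex_closedBall z _)
    (hf.differentiable two_ne_zero).differentiableOn
    ((hf.iterate_deriv' 1 1).differentiable one_ne_zero).differentiableOn fun x hx ↦ ?_⟩
  exact hpos x (hball ((mem_closedBall.1 hx).trans_lt (half_lt_self hδ)))

lemma exists_isMaxOn_of_tendsto_zero (hf : Continuous f) (htop : Tendsto f atTop (nhds 0))
    (hbot : Tendsto f atBot (nhds 0)) {x₀ : ℝ} (hx₀ : 0 < f x₀) :
    ∃ z, 0 < f z ∧ IsMaxOn f univ z := by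
  have hco : ∀ᶠ x in cocompact ℝ, f x ≤ f x₀ := by
    rw [cocompact_eq_atBot_atTop]
    exact eventually_sup.2 ⟨(hbot.eventually_lt_const hx₀).mono fun _ h ↦ h.le,
      (htop.eventually_lt_const hx₀).mono fun _ h ↦ h.le⟩
  obtain ⟨z, hz⟩ := hf.exists_forall_ge' x₀ hco
  exact ⟨z, hx₀.trans_le (hz x₀), fun x _ ↦ hz x⟩

theorem nonpos_of_deriv2_nonneg_of_pos (hf : ContDiff ℝ 2 f)
    (htop : Tendsto f atTop (nhds 0)) (hbot : Tendsto f atBot (nhds 0))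
    (hpos : ∀ x, 0 < f x → 0 ≤ deriv (deriv f) x) (x : ℝ) : f x ≤ 0 := by
  by_contra! hx
  obtain ⟨z, hz, hmax⟩ := exists_isMaxOn_of_tendsto_zero hf.continuous htop hbot hx
  -- the level set of the maximum is open by local convexity, hence all of `ℝ`
  have hopen : IsOpen {y | f y = f z} := by
    refine isOpen_iff_mem_nhds.2 fun y (hy : f y = f z) ↦ ?_
    obtain ⟨δ, hδ, hconv⟩ := exists_convexOn_closedBall_of_deriv2_nonneg hf hpos (hy ▸ hz)
    have hmax' : IsMaxOn f (closedBall y δ) y := fun w _ ↦ hy ▸ hmax (mem_univ w)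
    filter_upwards [closedBall_mem_nhds y hδ] with w hw
    exact (hconv.eqOn_closedBall_of_isMaxOn hmax' hw).trans hy
  have hall : {y | f y = f z} = univ :=
    IsClopen.eq_univ ⟨isClosed_eq hf.continuous continuous_const, hopen⟩ ⟨z, rfl⟩
  have hconst : f = fun _ ↦ f z := funext fun y ↦ (hall ▸ mem_univ y : y ∈ {y | f y = f z})
  rw [hconst] at htop
  exact hz.ne' (tendsto_nhds_unique tendsto_const_nhds htop)

theorem eq_zero_of_deriv2_sign (hf : ContDiff ℝ 2 f) (htop : Tendsto f atTop (nhds 0))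
    (hbot : Tendsto f atBot (nhds 0)) (hpos : ∀ x, 0 < f x → 0 ≤ deriv (deriv f) x)
    (hneg : ∀ x, f x < 0 → deriv (deriv f) x ≤ 0) (x : ℝ) : f x = 0 := by
  have hneg' : ∀ x, 0 < (-f) x → 0 ≤ deriv (deriv (-f)) x := fun x hx ↦ by
    rw [deriv.neg', deriv.fun_neg]
    exact neg_nonneg.2 (hneg x (neg_pos.1 hx))
  have hnegf : (-f) x ≤ 0 := nonpos_of_deriv2_nonneg_of_pos hf.neg
    (by simpa using htop.neg) (by simpa using hbot.neg) hneg' x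
  exact le_antisymm (nonpos_of_deriv2_nonneg_of_pos hf htop hbot hpos x)
    (neg_nonpos.1 hnegf)

theorem stmt13_general (lam γ : ℝ) (hlam : 0 < lam) (hγ : 0 < γ) (U₁ U₂ : ℝ → ℝ)
    (hU₁ : ContDiff ℝ 2 U₁) (hU₂ : ContDiff ℝ 2 U₂)
    (heq₁ : ∀ x, deriv (deriv U₁) x =
      lam * (Real.exp (U₁ x + U₂ x) + Real.exp (U₁ x - U₂ x) - 2))
    (heq₂ : ∀ x, deriv (deriv U₂) x =
      lam * γ * Real.exp (U₁ x) * (Real.exp (U₂ x) - Real.exp (-U₂ x)))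
    (t1 : Tendsto U₁ atTop (nhds 0)) (t2 : Tendsto U₁ atBot (nhds 0))
    (t3 : Tendsto U₂ atTop (nhds 0)) (t4 : Tendsto U₂ atBot (nhds 0)) :
    (∀ x, U₁ x = 0) ∧ (∀ x, U₂ x = 0) := by
  have hU₂0 : ∀ x, U₂ x = 0 := by
    refine eq_zero_of_deriv2_sign hU₂ t3 t4 (fun x hx ↦ ?_) (fun x hx ↦ ?_) <;> rw [heq₂]
    · exact mul_nonneg (by positivity) (sub_nonneg.2 (exp_le_exp.2 (by linarith)))
    · exact mul_nonpos_of_nonneg_of_nonpos (by positivity)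
        (sub_nonpos.2 (exp_le_exp.2 (by linarith)))
  have heq₁' : ∀ x, deriv (deriv U₁) x = 2 * lam * (exp (U₁ x) - 1) := fun x ↦ by
    rw [heq₁, hU₂0, add_zero, sub_zero]; ring
  refine ⟨eq_zero_of_deriv2_sign hU₁ t1 t2 (fun x hx ↦ ?_) (fun x hx ↦ ?_), hU₂0⟩ <;>
    rw [heq₁']
  · exact mul_nonneg (by positivity) (sub_nonneg.2 (one_le_exp hx.le))
  · exact mul_nonpos_of_nonneg_of_nonpos (by positivity) (sub_nonpos.2 (exp_le_one_iff.2 hx.le))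

theorem stmt13 (lam γ : ℝ) (hlam : 0 < lam) (hγ : 0 < γ) (U₁ U₂ : ℝ → ℝ)
    (hU₁ : ContDiff ℝ 2 U₁) (hU₂ : ContDiff ℝ 2 U₂)
    (hb₁ : ∃ M : ℝ, ∀ x, |U₁ x| ≤ M) (hb₂ : ∃ M : ℝ, ∀ x, |U₂ x| ≤ M)
    (heq₁ : ∀ x, deriv (deriv U₁) x =
      lam * (Real.exp (U₁ x + U₂ x) + Real.exp (U₁ x - U₂ x) - 2))
    (heq₂ : ∀ x, deriv (deriv U₂) x =
      lam * γ * Real.exp (U₁ x) * (Real.exp (U₂ x) - Real.exp (-U₂ x)))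
    (t1 : Tendsto U₁ atTop (nhds 0)) (t2 : Tendsto U₁ atBot (nhds 0))
    (t3 : Tendsto U₂ atTop (nhds 0)) (t4 : Tendsto U₂ atBot (nhds 0))
    (t5 : Tendsto (deriv U₁) atTop (nhds 0)) (t6 : Tendsto (deriv U₁) atBot (nhds 0))
    (t7 : Tendsto (deriv U₂) atTop (nhds 0)) (t8 : Tendsto (deriv U₂) atBot (nhds 0)) :
    (∀ x, U₁ x = 0) ∧ (∀ x, U₂ x = 0) :=
  stmt13_general lam γ hlam hγ U₁ U₂ hU₁ hU₂ heq₁ heq₂ t1 t2 t3 t4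
end

section
/- Let β > 0 and let h₀ : ℝ → ℝ be a continuous positive function with h₀(x) = e^{-β|x|} for |x| ≥ 1. Let u : ℝ → ℝ be absolutely continuous with ∫_ℝ (u')² dx = 1 and ∫_ℝ u·h₀ dx = 0. Then there is a constant C > 0 depending only on h₀ such that |u(x)| ≤ |x|^{1/2} + C for all x ∈ ℝ. -/
/-!
By Cauchy–Schwarz on `[y, x]`, `|u x - u y| ≤ √|x - y| ‖u'‖₂ = √|x - y|`. Since `u` has mean zero
against `h₀`, `u x ∫ h₀ = ∫ (u x - u y) h₀ y dy`, and `√|x - y| ≤ √|x| + √|y|` then gives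
`|u x| ≤ √|x| + (∫ √|y| h₀ y dy) / ∫ h₀`. Both integrals are finite because `h₀` is bounded by a
multiple of `exp (-β |x|)`.
-/

open Real MeasureTheory Set
open scoped Interval

theorem integral_abs_le_sqrt_mul_integral_sq {α : Type*} [MeasurableSpace α] {μ : Measure α}
    [IsFiniteMeasure μ] {f : α → ℝ} (hf : MemLp f 2 μ) :
    ∫ x, |f x| ∂μ ≤ √(μ.real univ * ∫ x, f x ^ 2 ∂μ) := by
  have h := integral_mul_norm_le_Lp_mul_Lq (f := fun _ ↦ (1 : ℝ)) HolderConjugate.two_two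
    (by simpa using memLp_const (μ := μ) (p := 2) (1 : ℝ)) (by simpa using hf)
  simp only [norm_one, one_mul, one_pow, integral_const, smul_eq_mul, mul_one, rpow_two,
    norm_eq_abs, sq_abs] at h
  rwa [sqrt_mul measureReal_nonneg, sqrt_eq_rpow, sqrt_eq_rpow]

theorem abs_intervalIntegral_le_sqrt_mul_integral_sq {f : ℝ → ℝ} (hf : MemLp f 2) (a b : ℝ) :
    |∫ x in a..b, f x| ≤ √(|b - a| * ∫ x, f x ^ 2) := by
  have : IsFiniteMeasure (volume.restrict (Ι a b)) :=
    isFiniteMeasure_restrict.mpr (by simp)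
  calc |∫ x in a..b, f x| ≤ ∫ x in Ι a b, |f x| := by
        simpa only [norm_eq_abs] using
          intervalIntegral.norm_integral_le_integral_norm_uIoc (f := f)
    _ ≤ √(volume.real (Ι a b) * ∫ x in Ι a b, f x ^ 2) := by
        simpa using integral_abs_le_sqrt_mul_integral_sq (hf.restrict (Ι a b))
    _ ≤ √(|b - a| * ∫ x, f x ^ 2) := by
        gcongr
        · simp [measureReal_def, Real.volume_uIoc]
        · exact .of_forall fun x ↦ sq_nonneg _
        · exact hf.integrable_sq
        · exact Measure.restrict_le_self

theorem sqrt_abs_sub_le (x y : ℝ) : √|x - y| ≤ √|x| + √|y| := by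
  rw [sqrt_le_left (by positivity)]
  nlinarith [abs_sub x y, sq_sqrt (abs_nonneg x), sq_sqrt (abs_nonneg y),
    mul_nonneg (sqrt_nonneg |x|) (sqrt_nonneg |y|)]

theorem abs_le_sqrt_abs_add_of_integral_mul_eq_zero {u w : ℝ → ℝ}
    (hu : ∀ x y, |u x - u y| ≤ √|x - y|) (hw : ∀ y, 0 ≤ w y) (hwi : Integrable w)
    (hmass : 0 < ∫ y, w y) (hsqrt : Integrable fun y ↦ √|y| * w y)
    (huw : Integrable fun y ↦ u y * w y) (hmean : ∫ y, u y * w y = 0) (x : ℝ) :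
    |u x| ≤ √|x| + (∫ y, √|y| * w y) / ∫ y, w y := by
  have hshift : ∫ y, (u x - u y) * w y = u x * ∫ y, w y := by
    simp only [sub_mul]
    rw [integral_sub (hwi.const_mul _) huw, hmean, sub_zero, integral_const_mul]
  have hbound : |u x| * ∫ y, w y ≤ √|x| * (∫ y, w y) + ∫ y, √|y| * w y :=
    calc |u x| * ∫ y, w y = |∫ y, (u x - u y) * w y| := by
          rw [hshift, abs_mul, abs_of_pos hmass]
      _ ≤ ∫ y, (√|x| * w y + √|y| * w y) := by
          refine norm_integral_le_of_norm_le (f := fun y ↦ (u x - u y) * w y)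
            ((hwi.const_mul _).add hsqrt) (.of_forall fun y ↦ ?_)
          rw [norm_mul, norm_eq_abs, norm_of_nonneg (hw y), ← add_mul]
          exact mul_le_mul_of_nonneg_right ((hu x y).trans (sqrt_abs_sub_le x y)) (hw y)
      _ = √|x| * (∫ y, w y) + ∫ y, √|y| * w y := by
          rw [integral_add (hwi.const_mul _) hsqrt, integral_const_mul]
  rw [← sub_le_iff_le_add', le_div_iff₀ hmass, sub_mul]
  linarith

theorem integrable_comp_abs {f : ℝ → ℝ} (hf : IntegrableOn f (Ioi 0)) :
    Integrable fun x ↦ f |x| := by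
  have hIoi : IntegrableOn (fun x ↦ f |x|) (Ioi 0) :=
    hf.congr_fun (fun x hx ↦ by rw [abs_of_pos hx]) measurableSet_Ioi
  rw [← integrableOn_univ, ← Iio_union_Ici (a := 0), integrableOn_union,
    integrableOn_Ici_iff_integrableOn_Ioi]
  refine ⟨?_, hIoi⟩
  rw [← (Measure.measurePreserving_neg volume).integrableOn_comp_preimage
    (Homeomorph.neg ℝ).measurableEmbedding]
  simpa [Function.comp_def] using hIoi

theorem integrable_rpow_abs_mul_exp_neg_mul_abs {s b : ℝ} (hs : -1 < s) (hb : 0 < b) :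
    Integrable fun x : ℝ ↦ |x| ^ s * exp (-b * |x|) :=
  integrable_comp_abs (f := fun t ↦ t ^ s * exp (-b * t)) <| by
    simpa using integrableOn_rpow_mul_exp_neg_mul_rpow hs one_pos hb

theorem Continuous.exists_abs_le_mul_exp_neg_abs {h : ℝ → ℝ} (hc : Continuous h) {β R : ℝ}
    (hdecay : ∀ x, R ≤ |x| → |h x| ≤ exp (-β * |x|)) :
    ∃ K, ∀ x, |h x| ≤ K * exp (-β * |x|) := by
  set g := fun x ↦ h x * exp (β * |x|)
  obtain ⟨S, hS⟩ := (isCompact_Icc (a := -R) (b := R)).exists_bound_of_continuousOn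
    (by fun_prop : Continuous g).continuousOn
  refine ⟨max S 1, fun x ↦ ?_⟩
  have hg : |g x| ≤ max S 1 := by
    rcases le_total |x| R with hx | hx
    · exact (hS x (abs_le.mp hx)).trans (le_max_left _ _)
    · calc |g x| = |h x| * exp (β * |x|) := by simp [g, abs_mul]
        _ ≤ exp (-β * |x|) * exp (β * |x|) := by gcongr; exact hdecay x hx
        _ = 1 := by rw [← exp_add]; simp
        _ ≤ max S 1 := le_max_right _ _
  calc |h x| = |g x| * exp (-β * |x|) := by
        simp only [g, abs_mul, abs_exp, mul_assoc, ← exp_add]; simp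
    _ ≤ max S 1 * exp (-β * |x|) := by gcongr

theorem integrable_rpow_abs_mul_of_abs_le_mul_exp_neg_abs {h : ℝ → ℝ}
    (hm : AEStronglyMeasurable h) {s β K : ℝ} (hs : -1 < s) (hβ : 0 < β)
    (hK : ∀ x, |h x| ≤ K * exp (-β * |x|)) :
    Integrable fun x ↦ |x| ^ s * h x := by
  refine ((integrable_rpow_abs_mul_exp_neg_mul_abs hs hβ).const_mul K).mono'
    ((measurable_abs.pow_const s).aestronglyMeasurable.mul hm) (.of_forall fun x ↦ ?_)
  rw [norm_mul, norm_eq_abs, norm_eq_abs, abs_of_nonneg (by positivity), mul_left_comm]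
  gcongr
  exact hK x

theorem stmt15 (β : ℝ) (hβ : 0 < β) (h₀ : ℝ → ℝ)
    (hc : Continuous h₀) (hpos : ∀ x, 0 < h₀ x)
    (hform : ∀ x : ℝ, 1 ≤ |x| → h₀ x = Real.exp (-β * |x|)) :
    ∃ C > 0, ∀ u : ℝ → ℝ,
      Differentiable ℝ u →
      (∀ a b : ℝ, u b - u a = ∫ x in a..b, deriv u x) →
      Integrable (fun x => (deriv u x) ^ 2) →
      (∫ x : ℝ, (deriv u x) ^ 2) = 1 →
      Integrable (fun x => u x * h₀ x) →
      (∫ x : ℝ, u x * h₀ x) = 0 →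
      ∀ x : ℝ, |u x| ≤ Real.sqrt |x| + C := by
  obtain ⟨K, hK⟩ := hc.exists_abs_le_mul_exp_neg_abs fun x hx ↦
    (abs_of_pos (hpos x)).trans_le (hform x hx).le
  have hint : Integrable h₀ := by
    simpa using integrable_rpow_abs_mul_of_abs_le_mul_exp_neg_abs hc.aestronglyMeasurable
      (s := 0) (by norm_num) hβ hK
  have hsqrt : Integrable fun y ↦ √|y| * h₀ y := by
    simpa only [sqrt_eq_rpow, one_div] using integrable_rpow_abs_mul_of_abs_le_mul_exp_neg_abs
      hc.aestronglyMeasurable (s := 1 / 2) (by norm_num) hβ hK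
  have hmass : 0 < ∫ y, h₀ y := by
    rw [integral_pos_iff_support_of_nonneg (fun x ↦ (hpos x).le) hint]
    simp [Function.support, fun x ↦ (hpos x).ne']
  have hC : 0 < (∫ y, √|y| * h₀ y) / (∫ y, h₀ y) + 1 := by
    have : 0 ≤ ∫ y, √|y| * h₀ y :=
      integral_nonneg fun y ↦ mul_nonneg (sqrt_nonneg |y|) (hpos y).le
    positivity
  refine ⟨_, hC, fun u _ hFTC hsq hnorm huh hmean x ↦ ?_⟩
  have hL2 : MemLp (deriv u) 2 :=
    (memLp_two_iff_integrable_sq (measurable_deriv u).aestronglyMeasurable).mpr hsq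
  have hHolder : ∀ x y, |u x - u y| ≤ √|x - y| := fun x y ↦ by
    simpa [hFTC y x, hnorm] using abs_intervalIntegral_le_sqrt_mul_integral_sq hL2 y x
  have := abs_le_sqrt_abs_add_of_integral_mul_eq_zero hHolder (fun y ↦ (hpos y).le) hint
    hmass hsqrt huh hmean x
  linarith
end

section
/- Let β > 0 and h₀ : ℝ → ℝ be continuous positive with h₀(x) = e^{-β|x|} for |x| ≥ 1, and dμ = h₀ dx. For any 0 < b < β there exists K > 0 such that for every absolutely continuous u with ∫(u')² dx = 1 and ∫ u dμ = 0, one has ∫_ℝ e^{b·u²} dμ ≤ K. -/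
/-!
By Cauchy–Schwarz, `∫ (u')² = 1` gives `|u x - u 0| ≤ √|x|`. Averaging this against
`dμ = h₀ dx`, the condition `∫ u dμ = 0` bounds `|u 0|` by `C = ∫ √|x| dμ / μ(ℝ)`. Hence
`|u x| ≤ C + √|x|` and, by Peter–Paul, `u(x)² ≤ (1 + ε)|x| + (1 + 1/ε)C²`. Choosing `ε` with
`b(1 + ε) < β`, the integrand `exp (b u²) h₀` is dominated by a constant times
`exp (b(1 + ε)|x|) h₀`, which is integrable since `h₀ = exp (-β|x|)` outside `[-1, 1]`.
-/

open Real MeasureTheory Set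
open scoped Interval

lemma integrable_exp_neg_mul_abs {δ : ℝ} (hδ : 0 < δ) :
    Integrable fun x : ℝ => exp (-δ * |x|) := by
  refine Integrable.of_integral_ne_zero ?_
  rw [integral_comp_abs (f := fun t => exp (-δ * t)), integral_exp_mul_Ioi (by linarith) 0]
  simp [hδ.ne']

lemma integrable_exp_mul_abs_mul {β c : ℝ} {h : ℝ → ℝ} (hh : Continuous h)
    (hform : ∀ x, 1 ≤ |x| → h x = exp (-β * |x|)) (hcβ : c < β) :
    Integrable fun x => exp (c * |x|) * h x := by
  have hcont : Continuous fun x => exp (c * |x|) * h x := by fun_prop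
  have hin : IntegrableOn (fun x => exp (c * |x|) * h x) (Icc (-1) 1) :=
    hcont.continuousOn.integrableOn_Icc
  have hout : IntegrableOn (fun x => exp (c * |x|) * h x) (Icc (-1) 1)ᶜ := by
    refine (integrable_exp_neg_mul_abs (sub_pos.2 hcβ)).integrableOn.congr_fun
      (fun x hx => ?_) measurableSet_Icc.compl
    have hx1 : 1 ≤ |x| := by
      by_contra! hlt
      exact hx (abs_le.1 hlt.le)
    rw [hform x hx1, ← exp_add]
    ring_nf
  simpa using hin.union hout

lemma sqrt_le_exp (r : ℝ) : √r ≤ exp r := by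
  rw [sqrt_le_left (exp_pos r).le]
  nlinarith [add_one_le_exp r, exp_pos r]

lemma integrable_sqrt_abs_mul {c : ℝ} (hc : 0 < c) {h : ℝ → ℝ} (hh : AEStronglyMeasurable h)
    (hexp : Integrable fun x => exp (c * |x|) * h x) :
    Integrable fun x => √|x| * h x := by
  refine (hexp.norm.const_mul (√c)⁻¹).mono' (by fun_prop) (.of_forall fun x => ?_)
  have hsc : 0 < √c := sqrt_pos.2 hc
  have key : √|x| ≤ (√c)⁻¹ * exp (c * |x|) := by
    rw [← div_eq_inv_mul, le_div_iff₀ hsc, ← sqrt_mul (abs_nonneg x), mul_comm]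
    exact sqrt_le_exp _
  rw [norm_mul, norm_mul, norm_of_nonneg (sqrt_nonneg _), norm_of_nonneg (exp_pos _).le,
    ← mul_assoc]
  exact mul_le_mul_of_nonneg_right key (norm_nonneg _)

lemma add_sq_le_of_pos {ε : ℝ} (hε : 0 < ε) (p q : ℝ) :
    (p + q) ^ 2 ≤ (1 + ε⁻¹) * p ^ 2 + (1 + ε) * q ^ 2 := by
  have : 0 ≤ (p - ε * q) ^ 2 / ε := by positivity
  have h : (1 + ε⁻¹) * p ^ 2 + (1 + ε) * q ^ 2 - (p + q) ^ 2 = (p - ε * q) ^ 2 / ε := by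
    field_simp; ring
  linarith

lemma two_mul_abs_intervalIntegral_le {g : ℝ → ℝ} (hg : AEStronglyMeasurable g)
    (hg2 : Integrable fun x => g x ^ 2) (a b : ℝ) {s : ℝ} (hs : 0 < s) :
    2 * |∫ x in a..b, g x| ≤ s * (∫ x, g x ^ 2) + |b - a| / s := by
  have hfin : volume (Ι a b) ≠ ⊤ := by rw [uIoc]; exact measure_Ioc_lt_top.ne
  have hpt : ∀ x, 2 * |g x| ≤ s * g x ^ 2 + 1 / s := by
    intro x
    have : 0 ≤ (s * |g x| - 1) ^ 2 / s := by positivity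
    have h : s * g x ^ 2 + 1 / s - 2 * |g x| = (s * |g x| - 1) ^ 2 / s := by
      field_simp; rw [← sq_abs (g x)]; ring
    linarith
  have hmaj : IntegrableOn (fun x => s * g x ^ 2 + 1 / s) (Ι a b) :=
    (hg2.integrableOn.const_mul s).add (integrableOn_const hfin)
  have habs : IntegrableOn (fun x => 2 * |g x|) (Ι a b) :=
    hmaj.mono' (by fun_prop) (.of_forall fun x => by simpa using hpt x)
  calc 2 * |∫ x in a..b, g x| ≤ ∫ x in Ι a b, 2 * |g x| := by
        rw [integral_const_mul]
        gcongr
        simpa using intervalIntegral.norm_integral_le_integral_norm_uIoc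
          (f := g) (a := a) (b := b) (μ := volume)
    _ ≤ ∫ x in Ι a b, (s * g x ^ 2 + 1 / s) :=
        setIntegral_mono_on habs hmaj measurableSet_uIoc fun x _ => hpt x
    _ = s * (∫ x in Ι a b, g x ^ 2) + |b - a| / s := by
        rw [integral_add (hg2.integrableOn.const_mul s) (integrableOn_const hfin),
          integral_const_mul, setIntegral_const, smul_eq_mul, measureReal_def, uIoc,
          Real.volume_Ioc, max_sub_min_eq_abs, ENNReal.toReal_ofReal (abs_nonneg _)]
        ring
    _ ≤ s * (∫ x, g x ^ 2) + |b - a| / s := by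
        gcongr ?_ + _
        exact mul_le_mul_of_nonneg_left
          (setIntegral_le_integral hg2 (.of_forall fun x => sq_nonneg _)) hs.le

lemma abs_intervalIntegral_le_sqrt {g : ℝ → ℝ} (hg : AEStronglyMeasurable g)
    (hg2 : Integrable fun x => g x ^ 2) (hnorm : ∫ x, g x ^ 2 ≤ 1) (a b : ℝ) :
    |∫ x in a..b, g x| ≤ √|b - a| := by
  rcases eq_or_ne a b with rfl | hab
  · simp
  have hs : 0 < √|b - a| := sqrt_pos.2 (abs_pos.2 (sub_ne_zero.2 hab.symm))
  have h := two_mul_abs_intervalIntegral_le hg hg2 a b hs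
  have h1 : √|b - a| * ∫ x, g x ^ 2 ≤ √|b - a| := mul_le_of_le_one_right hs.le hnorm
  have h2 : |b - a| / √|b - a| = √|b - a| := div_sqrt
  linarith

lemma abs_mul_integral_le_of_integral_mul_eq_zero {α : Type*} [MeasurableSpace α] {μ : Measure α}
    {u φ w : α → ℝ} {x₀ : α} (hw : Integrable w μ) (hw0 : ∀ x, 0 ≤ w x)
    (huw : Integrable (fun x => u x * w x) μ) (hmean : ∫ x, u x * w x ∂μ = 0)
    (hφw : Integrable (fun x => φ x * w x) μ) (hosc : ∀ x, |u x - u x₀| ≤ φ x) :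
    |u x₀| * ∫ x, w x ∂μ ≤ ∫ x, φ x * w x ∂μ := by
  have hdiff : ∫ x, (u x₀ - u x) * w x ∂μ = u x₀ * ∫ x, w x ∂μ := by
    simp_rw [sub_mul]
    rw [integral_sub (hw.const_mul _) huw, hmean, sub_zero, integral_const_mul]
  rw [← abs_of_nonneg (integral_nonneg hw0), ← abs_mul, ← hdiff]
  refine (abs_integral_le_integral_abs).trans (integral_mono_of_nonneg
    (.of_forall fun x => abs_nonneg _) hφw (.of_forall fun x => ?_))
  dsimp only
  rw [abs_mul, abs_of_nonneg (hw0 x), abs_sub_comm]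
  exact mul_le_mul_of_nonneg_right (hosc x) (hw0 x)

theorem stmt16_general (β : ℝ) (h₀ : ℝ → ℝ)
    (hc : Continuous h₀) (hpos : ∀ x, 0 < h₀ x)
    (hform : ∀ x : ℝ, 1 ≤ |x| → h₀ x = Real.exp (-β * |x|))
    (b : ℝ) (hb : 0 < b) (hbβ : b < β) :
    ∃ K > 0, ∀ u : ℝ → ℝ,
      Differentiable ℝ u →
      (∀ a b' : ℝ, u b' - u a = ∫ x in a..b', deriv u x) →
      Integrable (fun x => (deriv u x) ^ 2) →
      (∫ x : ℝ, (deriv u x) ^ 2) = 1 →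
      Integrable (fun x => u x * h₀ x) →
      (∫ x : ℝ, u x * h₀ x) = 0 →
      (∫⁻ x : ℝ, ENNReal.ofReal (Real.exp (b * (u x) ^ 2) * h₀ x)) ≤ ENNReal.ofReal K := by
  obtain ⟨ε, hε, hεβ⟩ : ∃ ε > 0, b * (1 + ε) < β :=
    ⟨(β - b) / (2 * b), div_pos (by linarith) (by linarith), by field_simp; linarith⟩
  have hweight (c : ℝ) (hcβ : c < β) : Integrable fun x => exp (c * |x|) * h₀ x :=
    integrable_exp_mul_abs_mul hc hform hcβ
  have hh₀ : Integrable h₀ := by simpa using hweight 0 (hb.trans hbβ)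
  set I := ∫ x, h₀ x
  set C := (∫ x, √|x| * h₀ x) / I
  set J := ∫ x, exp (b * (1 + ε) * |x|) * h₀ x
  have hI : 0 < I := integral_pos_of_integrable_nonneg_nonzero (x := 0) hc hh₀
    (fun x => (hpos x).le) (hpos 0).ne'
  have hJ : 0 < J := integral_pos_of_integrable_nonneg_nonzero (x := 0) (by fun_prop)
    (hweight _ hεβ) (fun x => mul_nonneg (exp_pos _).le (hpos x).le)
    (mul_pos (exp_pos _) (hpos 0)).ne'
  set M := exp (b * (1 + ε⁻¹) * C ^ 2)
  refine ⟨M * J, by positivity, ?_⟩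
  intro u _ hFTC hint hnorm hμint hμzero
  have hosc (x : ℝ) : |u x - u 0| ≤ √|x| := by
    simpa [hFTC 0 x] using abs_intervalIntegral_le_sqrt
      (measurable_deriv u).aestronglyMeasurable hint hnorm.le 0 x
  have hu0 : |u 0| ≤ C := (le_div_iff₀ hI).2 <|
    abs_mul_integral_le_of_integral_mul_eq_zero hh₀ (fun x => (hpos x).le) hμint hμzero
      (integrable_sqrt_abs_mul hb hc.aestronglyMeasurable (hweight b hbβ)) hosc
  have hpt (x : ℝ) : exp (b * u x ^ 2) * h₀ x ≤ M * (exp (b * (1 + ε) * |x|) * h₀ x) := by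
    have hux : |u x| ≤ C + √|x| := by
      have := abs_sub_abs_le_abs_sub (u x) (u 0)
      linarith [hosc x]
    have hsq : u x ^ 2 ≤ (1 + ε⁻¹) * C ^ 2 + (1 + ε) * √|x| ^ 2 := by
      rw [← sq_abs]
      exact (pow_le_pow_left₀ (abs_nonneg _) hux 2).trans (add_sq_le_of_pos hε C √|x|)
    rw [sq_sqrt (abs_nonneg x)] at hsq
    rw [← mul_assoc, ← exp_add]
    gcongr
    · exact (hpos x).le
    · nlinarith
  calc ∫⁻ x, ENNReal.ofReal (exp (b * u x ^ 2) * h₀ x)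
      ≤ ∫⁻ x, ENNReal.ofReal (M * (exp (b * (1 + ε) * |x|) * h₀ x)) :=
        lintegral_mono fun x => ENNReal.ofReal_le_ofReal (hpt x)
    _ = ENNReal.ofReal (M * J) := by
        rw [← integral_const_mul, ofReal_integral_eq_lintegral_ofReal
          ((hweight _ hεβ).const_mul _) (.of_forall fun x => by have := hpos x; positivity)]

theorem stmt16 (β : ℝ) (hβ : 0 < β) (h₀ : ℝ → ℝ)
    (hc : Continuous h₀) (hpos : ∀ x, 0 < h₀ x)
    (hform : ∀ x : ℝ, 1 ≤ |x| → h₀ x = Real.exp (-β * |x|))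
    (b : ℝ) (hb : 0 < b) (hbβ : b < β) :
    ∃ K > 0, ∀ u : ℝ → ℝ,
      Differentiable ℝ u →
      (∀ a b' : ℝ, u b' - u a = ∫ x in a..b', deriv u x) →
      Integrable (fun x => (deriv u x) ^ 2) →
      (∫ x : ℝ, (deriv u x) ^ 2) = 1 →
      Integrable (fun x => u x * h₀ x) →
      (∫ x : ℝ, u x * h₀ x) = 0 →
      (∫⁻ x : ℝ, ENNReal.ofReal (Real.exp (b * (u x) ^ 2) * h₀ x)) ≤ ENNReal.ofReal K :=
  stmt16_general β h₀ hc hpos hform b hb hbβ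
end

section
/- Let β > 0, h₀ continuous positive with h₀(x) = e^{-β|x|} for |x| ≥ 1, dμ = h₀ dx. There exists C > 0 such that every absolutely continuous v : ℝ → ℝ with v' ∈ L²(dx) and ∫_ℝ v dμ = 0 satisfies ∫_ℝ v² dμ ≤ C·∫_ℝ (v')² dx. -/
open Real MeasureTheory intervalIntegral

/-!
Since `∫ v dμ = 0`, the constant `v 0` can only increase the weighted second moment:
`∫ v² dμ ≤ ∫ (v - v 0)² dμ`. By Cauchy–Schwarz on `v x - v 0 = ∫₀ˣ v'`, the integrand is at most
`|x| · ‖v'‖²₂`, and `∫ |x| dμ < ∞` because `h₀` decays exponentially.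
-/

section

variable {α : Type*} [MeasurableSpace α] {μ : Measure α}

lemma sq_integral_le_measureReal_univ_mul_integral_sq [IsFiniteMeasure μ] {f : α → ℝ}
    (hf : MemLp f 2 μ) : (∫ x, f x ∂μ) ^ 2 ≤ μ.real Set.univ * ∫ x, f x ^ 2 ∂μ := by
  have hholder := integral_mul_le_Lp_mul_Lq_of_nonneg (μ := μ) Real.HolderConjugate.two_two
    (Filter.Eventually.of_forall fun x => abs_nonneg (f x))
    (Filter.Eventually.of_forall fun _ => zero_le_one)
    (by rw [ENNReal.ofReal_ofNat]; exact hf.abs)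
    (by simpa using memLp_const (μ := μ) (p := 2) (1 : ℝ))
  simp only [rpow_two, sq_abs, one_pow, mul_one, MeasureTheory.integral_const, smul_eq_mul,
    ← sqrt_eq_rpow] at hholder
  calc (∫ x, f x ∂μ) ^ 2 ≤ (∫ x, |f x| ∂μ) ^ 2 := by
        rw [← sq_abs]
        exact pow_le_pow_left₀ (abs_nonneg _) (abs_integral_le_integral_abs) 2
    _ ≤ (√(∫ x, f x ^ 2 ∂μ) * √(μ.real Set.univ)) ^ 2 :=
        pow_le_pow_left₀ (integral_nonneg fun _ => abs_nonneg _) hholder 2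
    _ = μ.real Set.univ * ∫ x, f x ^ 2 ∂μ := by
        rw [mul_pow, sq_sqrt (integral_nonneg fun _ => sq_nonneg _), sq_sqrt measureReal_nonneg,
          mul_comm]

lemma integral_sq_mul_le_integral_sub_sq_mul {v w : α → ℝ} (hw : ∀ x, 0 ≤ w x)
    (hwi : Integrable w μ) (hv2 : Integrable (fun x => v x ^ 2 * w x) μ)
    (hv1 : Integrable (fun x => v x * w x) μ)
    (hmean : ∫ x, v x * w x ∂μ = 0) (c : ℝ) :
    ∫ x, v x ^ 2 * w x ∂μ ≤ ∫ x, (v x - c) ^ 2 * w x ∂μ := by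
  have hexpand : (fun x => (v x - c) ^ 2 * w x) =
      fun x => v x ^ 2 * w x - 2 * c * (v x * w x) + c ^ 2 * w x := by
    funext x; ring
  rw [hexpand, integral_add (f := fun x => v x ^ 2 * w x - 2 * c * (v x * w x))
      (hv2.sub (hv1.const_mul _)) (hwi.const_mul _),
    integral_sub (f := fun x => v x ^ 2 * w x) hv2 (hv1.const_mul _),
    MeasureTheory.integral_const_mul, MeasureTheory.integral_const_mul, hmean]
  nlinarith [integral_nonneg (μ := μ) (f := w) hw, sq_nonneg c]

end

lemma sq_intervalIntegral_le_abs_sub_mul_integral_sq {f : ℝ → ℝ}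
    (hf : AEStronglyMeasurable f volume) (hsq : Integrable fun t => f t ^ 2) (a b : ℝ) :
    (∫ t in a..b, f t) ^ 2 ≤ |b - a| * ∫ t, f t ^ 2 := by
  have : IsFiniteMeasure (volume.restrict (Set.uIoc a b)) := by
    rw [isFiniteMeasure_restrict]; exact measure_Ioc_lt_top.ne
  have hmem : MemLp f 2 (volume.restrict (Set.uIoc a b)) :=
    ((memLp_two_iff_integrable_sq hf).2 hsq).restrict _
  calc (∫ t in a..b, f t) ^ 2 = (∫ t in Set.uIoc a b, f t) ^ 2 := by
        rw [← sq_abs, ← Real.norm_eq_abs, norm_integral_eq_norm_integral_uIoc, Real.norm_eq_abs,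
          sq_abs]
    _ ≤ volume.real (Set.uIoc a b) * ∫ t in Set.uIoc a b, f t ^ 2 := by
        simpa using sq_integral_le_measureReal_univ_mul_integral_sq hmem
    _ ≤ |b - a| * ∫ t, f t ^ 2 := by
        rw [measureReal_def, Real.volume_uIoc, ENNReal.toReal_ofReal (abs_nonneg _)]
        exact mul_le_mul_of_nonneg_left
          (setIntegral_le_integral hsq (Filter.Eventually.of_forall fun _ => sq_nonneg _))
          (abs_nonneg _)

lemma integrable_of_one_add_abs_sq_mul_abs_le {f : ℝ → ℝ} (hf : AEStronglyMeasurable f volume)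
    {A : ℝ} (hA : ∀ x, (1 + |x|) ^ 2 * |f x| ≤ A) : Integrable f := by
  refine ((integrable_one_add_norm (E := ℝ) (r := 2) (by simp)).const_mul A).mono' hf
    (Filter.Eventually.of_forall fun x => ?_)
  have hpos : (0 : ℝ) < (1 + |x|) ^ 2 := by positivity
  rw [Real.norm_eq_abs, Real.norm_eq_abs, rpow_neg (by positivity), rpow_two, ← div_eq_mul_inv,
    le_div_iff₀ hpos, mul_comm]
  exact hA x

lemma one_add_mul_exp_neg_le {a t : ℝ} (ha : 0 < a) (ht : 0 ≤ t) :
    (1 + t) * exp (-(a * t)) ≤ 1 + 1 / a := by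
  have hexp : exp (-(a * t)) ≤ 1 := exp_le_one_iff.2 (by nlinarith)
  have hmul : a * t * exp (-(a * t)) ≤ 1 :=
    (mul_exp_neg_le_exp_neg_one _).trans (exp_le_one_iff.2 (by norm_num))
  calc (1 + t) * exp (-(a * t)) = exp (-(a * t)) + 1 / a * (a * t * exp (-(a * t))) := by
        field_simp
    _ ≤ 1 + 1 / a * 1 := by gcongr
    _ = 1 + 1 / a := by ring

lemma exists_one_add_abs_pow_three_mul_le {β : ℝ} (hβ : 0 < β) {h₀ : ℝ → ℝ} (hc : Continuous h₀)
    (hform : ∀ x : ℝ, 1 ≤ |x| → h₀ x = exp (-β * |x|)) :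
    ∃ A, ∀ x, (1 + |x|) ^ 3 * h₀ x ≤ A := by
  obtain ⟨z, -, hz⟩ := isCompact_Icc.exists_isMaxOn (Set.nonempty_Icc.2 (by norm_num : (-1:ℝ) ≤ 1))
    (((continuous_const.add continuous_abs).pow 3).mul hc).continuousOn
  refine ⟨max ((1 + |z|) ^ 3 * h₀ z) ((1 + 3 / β) ^ 3), fun x => ?_⟩
  rcases le_total |x| 1 with hx | hx
  · exact le_max_of_le_left (hz (abs_le.1 hx))
  · refine le_max_of_le_right ?_
    have hcube : (1 + |x|) ^ 3 * exp (-β * |x|) = ((1 + |x|) * exp (-(β / 3 * |x|))) ^ 3 := by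
      rw [mul_pow, ← exp_nat_mul]; ring_nf
    rw [hform x hx, hcube]
    have := one_add_mul_exp_neg_le (by positivity : 0 < β / 3) (abs_nonneg x)
    rw [one_div_div] at this
    gcongr

theorem stmt18 (β : ℝ) (hβ : 0 < β) (h₀ : ℝ → ℝ)
    (hc : Continuous h₀) (hpos : ∀ x, 0 < h₀ x)
    (hform : ∀ x : ℝ, 1 ≤ |x| → h₀ x = Real.exp (-β * |x|)) :
    ∃ C > 0, ∀ v : ℝ → ℝ,
      Differentiable ℝ v →
      (∀ a b : ℝ, v b - v a = ∫ x in a..b, deriv v x) →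
      Integrable (fun x => (deriv v x) ^ 2) →
      Integrable (fun x => (v x) ^ 2 * h₀ x) →
      Integrable (fun x => v x * h₀ x) →
      (∫ x : ℝ, v x * h₀ x) = 0 →
      (∫ x : ℝ, (v x) ^ 2 * h₀ x) ≤ C * ∫ x : ℝ, (deriv v x) ^ 2 := by
  obtain ⟨A, hA⟩ := exists_one_add_abs_pow_three_mul_le hβ hc hform
  have hw : ∀ x, 0 ≤ h₀ x := fun x => (hpos x).le
  have hw₂ : ∀ x, 0 ≤ (1 + |x|) ^ 2 * h₀ x := fun x => by positivity [hw x]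
  have hwi : Integrable h₀ := integrable_of_one_add_abs_sq_mul_abs_le (A := A)
    hc.aestronglyMeasurable fun x => by
      rw [abs_of_nonneg (hw x)]
      nlinarith [hA x, mul_nonneg (hw₂ x) (abs_nonneg x)]
  have hwi₁ : Integrable fun x => |x| * h₀ x := integrable_of_one_add_abs_sq_mul_abs_le (A := A)
    (continuous_abs.mul hc).aestronglyMeasurable fun x => by
      rw [abs_of_nonneg (mul_nonneg (abs_nonneg x) (hw x))]
      nlinarith [hA x, hw₂ x]
  have hm₁ : 0 ≤ ∫ x, |x| * h₀ x := integral_nonneg fun x => mul_nonneg (abs_nonneg x) (hw x)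
  refine ⟨(∫ x, |x| * h₀ x) + 1, by positivity, fun v _ hftc hdv hv2 hv1 hmean => ?_⟩
  set K := ∫ x, deriv v x ^ 2
  have hK : 0 ≤ K := integral_nonneg fun _ => sq_nonneg _
  have hosc : ∀ x, (v x - v 0) ^ 2 ≤ |x| * K := fun x => by
    simpa [hftc 0 x] using
      sq_intervalIntegral_le_abs_sub_mul_integral_sq (aestronglyMeasurable_deriv v volume) hdv 0 x
  calc ∫ x, v x ^ 2 * h₀ x ≤ ∫ x, (v x - v 0) ^ 2 * h₀ x :=
        integral_sq_mul_le_integral_sub_sq_mul hw hwi hv2 hv1 hmean (v 0)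
    _ ≤ ∫ x, K * (|x| * h₀ x) :=
        integral_mono_of_nonneg
          (Filter.Eventually.of_forall fun x => mul_nonneg (sq_nonneg _) (hw x))
          (hwi₁.const_mul K) (Filter.Eventually.of_forall fun x => by nlinarith [hosc x, hw x])
    _ = K * ∫ x, |x| * h₀ x := MeasureTheory.integral_const_mul _ _
    _ ≤ ((∫ x, |x| * h₀ x) + 1) * K := by nlinarith
end
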